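/- Fix an odd integer l ≥ 1, let ζ = e^{2πi/l}, ω = e^{πi/l}, let P ∈ M_l(ℂ) be the cyclic permutation matrix (P_{i,i+1} = 1 for 1 ≤ i ≤ l−1, P_{l,1} = 1, other entries 0) and Q = diag(ζ, ζ², …, ζ^l), and for r, m ∈ ℤ set a_{r,m} = ω^{rm}·Q^r·P^m and c_{r,m} = a_{r,m} − (−1)^m·ζ^r·a_{−r,m}. Then the ℂ-linear span of { c_{r,m} : r, m ∈ ℤ } is all of M_l(ℂ). -/
import Mathlib


open Complex

/-- The `l×l` complex matrix algebra, with rows and columns indexed cyclically. -/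
abbrev MatL (l : ℕ) := Matrix (ZMod l) (ZMod l) ℂ

/-- `ζ = e^{2πi/l}`. -/
noncomputable def zetaL (l : ℕ) : ℂ := Complex.exp (2 * Real.pi * Complex.I / l)

/-- The cyclic permutation matrix `P` (with `P_{i,i+1} = 1` cyclically). -/
noncomputable def Pmat (l : ℕ) : MatL l :=
  Matrix.of fun i j => if j = i + 1 then (1 : ℂ) else 0

/-- The diagonal matrix `Q = diag(ζ, ζ², …, ζ^l)`. -/
noncomputable def Qmat (l : ℕ) : MatL l :=
  Matrix.of fun i j => if i = j then zetaL l ^ (i.val + 1) else 0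

/-- `ω = e^{πi/l}`. -/
noncomputable def omegaL (l : ℕ) : ℂ := Complex.exp (Real.pi * Complex.I / l)

/-- The matrices `a_{r,m} = ω^{rm} · Q^r · P^m` for `r, m ∈ ℤ`. -/
noncomputable def amat (l : ℕ) [NeZero l] (r m : ℤ) : MatL l :=
  omegaL l ^ (r * m) • (Qmat l ^ r * Pmat l ^ m)


/-- `c_{r,m} = a_{r,m} − (−1)^m ζ^r a_{−r,m}`. -/
noncomputable def cmat (l : ℕ) [NeZero l] (r m : ℤ) : MatL l :=
  amat l r m - ((-1 : ℂ) ^ m * zetaL l ^ r) • amat l (-r) m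

set_option linter.unusedSectionVars false


section aux
variable (l : ℕ) [NeZero l]

lemma omegaL_ne_zero : omegaL l ≠ 0 := Complex.exp_ne_zero _

lemma omegaL_pow_l : omegaL l ^ l = -1 := by
  rw [omegaL, ← Complex.exp_nat_mul]
  have : (l : ℂ) ≠ 0 := Nat.cast_ne_zero.2 (NeZero.ne l)
  rw [show (l : ℂ) * (↑Real.pi * Complex.I / ↑l) = ↑Real.pi * Complex.I by field_simp]
  exact Complex.exp_pi_mul_I

lemma zetaL_prim : IsPrimitiveRoot (zetaL l) l :=
  Complex.isPrimitiveRoot_exp l (NeZero.ne l)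

lemma zetaL_pow_l : zetaL l ^ l = 1 := (zetaL_prim l).pow_eq_one

lemma zetaL_ne_zero : zetaL l ≠ 0 := Complex.exp_ne_zero _

lemma Pmat_pow (m : ℕ) :
    Pmat l ^ m = Matrix.of fun i j => if j = i + (m : ZMod l) then (1 : ℂ) else 0 := by
  induction m with
  | zero =>
      ext i j
      simp [Matrix.one_apply, eq_comm]
  | succ m ih =>
      rw [pow_succ, ih]
      ext i j
      rw [Matrix.mul_apply]
      simp only [Matrix.of_apply, Pmat, ite_mul, one_mul, zero_mul]
      rw [Finset.sum_ite_eq' Finset.univ (i + (m : ZMod l))]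
      simp [add_assoc]

lemma Pmat_pow_l : Pmat l ^ l = 1 := by
  rw [Pmat_pow]
  ext i j
  simp [Matrix.one_apply, ZMod.natCast_self, eq_comm]

lemma Pmat_isUnit_det : IsUnit (Pmat l).det := by
  have h : (Pmat l).det ^ l = 1 := by
    rw [← Matrix.det_pow, Pmat_pow_l, Matrix.det_one]
  exact IsUnit.of_pow_eq_one h (NeZero.ne l)

lemma Qmat_diag : Qmat l = Matrix.diagonal fun i => zetaL l ^ (i.val + 1) := by
  ext i j
  by_cases h : i = j <;> simp [Qmat, Matrix.diagonal_apply, h]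

lemma Qmat_pow (r : ℕ) :
    Qmat l ^ r = Matrix.diagonal fun i => (zetaL l ^ (i.val + 1)) ^ r := by
  rw [Qmat_diag, Matrix.diagonal_pow]
  rfl

lemma amat_nat (r m : ℕ) :
    amat l r m = omegaL l ^ (r * m) • (Qmat l ^ r * Pmat l ^ m) := by
  rw [amat, ← Nat.cast_mul, zpow_natCast, zpow_natCast, zpow_natCast]

lemma amat_shift (r m : ℤ) :
    amat l r (m + l) = ((-1 : ℂ)) ^ r • amat l r m := by
  rw [amat, amat]
  rw [Matrix.zpow_add (Pmat_isUnit_det l), zpow_natCast, Pmat_pow_l, mul_one]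
  rw [mul_add, zpow_add₀ (omegaL_ne_zero l), smul_smul]
  congr 1
  rw [mul_comm]
  rw [show r * (l : ℤ) = (l : ℤ) * r from mul_comm _ _, zpow_mul, zpow_natCast,
    omegaL_pow_l]

lemma neg_one_zpow_neg (r : ℤ) : ((-1 : ℂ)) ^ (-r) = (-1) ^ r := by
  rw [zpow_neg, ← inv_zpow, inv_neg, inv_one]

lemma neg_one_zpow_mul_self (r : ℤ) : ((-1 : ℂ)) ^ r * (-1) ^ r = 1 := by
  rw [← zpow_add₀ (by norm_num : (-1:ℂ) ≠ 0)]
  rw [show r + r = 2 * r from (two_mul r).symm, zpow_mul]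
  norm_num

lemma amat_mem (hl : Odd l) (r m : ℤ) :
    amat l r m ∈ Submodule.span ℂ {X : MatL l | ∃ r m : ℤ, X = cmat l r m} := by
  have hu : ((-1 : ℂ)) ^ r * (-1) ^ r = 1 := neg_one_zpow_mul_self r
  have hml : ((-1 : ℂ)) ^ (m + l) = -(-1) ^ m := by
    rw [zpow_add₀ (by norm_num : (-1:ℂ) ≠ 0), zpow_natCast, Odd.neg_one_pow hl, mul_neg_one]
  have key : amat l r m
      = (2⁻¹ : ℂ) • cmat l r m + ((2⁻¹ : ℂ) * (-1) ^ r) • cmat l r (m + l) := by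
    rw [cmat, cmat, amat_shift l r m, amat_shift l (-r) m, hml, neg_one_zpow_neg]
    ext p q
    simp only [Matrix.add_apply, Matrix.sub_apply, Matrix.smul_apply, smul_eq_mul]
    linear_combination (-(2⁻¹ * amat l r m p q)
      - 2⁻¹ * (-1:ℂ) ^ m * zetaL l ^ r * amat l (-r) m p q) * hu
  rw [key]
  exact add_mem
    (Submodule.smul_mem _ _ (Submodule.subset_span ⟨r, m, rfl⟩))
    (Submodule.smul_mem _ _ (Submodule.subset_span ⟨r, m + l, rfl⟩))

lemma std_mem (i j : ZMod l) :
    Matrix.single i j (1 : ℂ) ∈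
      Submodule.span ℂ {X : MatL l | ∃ r m : ℤ, X = amat l r m} := by
  set m : ℕ := (j - i).val with hm
  have hmcast : ((m : ℕ) : ZMod l) = j - i := ZMod.natCast_rightInverse (j - i)
  have hzi : zetaL l ^ (i.val + 1) ≠ 0 := pow_ne_zero _ (zetaL_ne_zero l)
  have hln : (l : ℂ) ≠ 0 := Nat.cast_ne_zero.2 (NeZero.ne l)
  have key : Matrix.single i j (1 : ℂ) =
      ∑ r ∈ Finset.range l,
        ((l : ℂ)⁻¹ * ((zetaL l ^ (i.val + 1)) ^ r)⁻¹ * (omegaL l ^ (r * m))⁻¹) •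
          amat l r m := by
    ext p q
    rw [Matrix.sum_apply]
    have hent : ∀ r : ℕ, (((l : ℂ)⁻¹ * ((zetaL l ^ (i.val + 1)) ^ r)⁻¹ *
        (omegaL l ^ (r * m))⁻¹) • amat l (r : ℤ) (m : ℤ)) p q
        = if q = p + (m : ZMod l) then
            (l : ℂ)⁻¹ * ((zetaL l ^ (p.val + 1)) * (zetaL l ^ (i.val + 1))⁻¹) ^ r
          else 0 := by
      intro r
      rw [amat_nat, Qmat_pow, Pmat_pow]
      rw [Matrix.smul_apply, Matrix.smul_apply, Matrix.diagonal_mul, Matrix.of_apply]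
      by_cases hq : q = p + (m : ZMod l)
      · rw [if_pos hq, if_pos hq]
        rw [smul_eq_mul, smul_eq_mul, mul_one]
        rw [mul_pow, inv_pow]
        have hw : omegaL l ^ (r * m) ≠ 0 := pow_ne_zero _ (omegaL_ne_zero l)
        field_simp
      · simp [hq]
    rw [Finset.sum_congr rfl fun r _ => hent r]
    by_cases hq : q = p + (m : ZMod l)
    · simp only [if_pos hq]
      rw [← Finset.mul_sum]
      set x : ℂ := zetaL l ^ (p.val + 1) * (zetaL l ^ (i.val + 1))⁻¹ with hx
      have hxl : x ^ l = 1 := by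
        rw [hx, mul_pow, inv_pow, ← pow_mul, ← pow_mul, mul_comm (p.val+1) l,
          mul_comm (i.val+1) l, pow_mul, pow_mul, zetaL_pow_l, one_pow, one_pow,
          inv_one, mul_one]
      have hx1 : x = 1 ↔ p = i := by
        rw [hx, mul_inv_eq_one₀ hzi]
        constructor
        · intro h
          have h' : zetaL l ^ p.val * zetaL l = zetaL l ^ i.val * zetaL l := by
            rw [← pow_succ, ← pow_succ]; exact h
          have h2 : zetaL l ^ p.val = zetaL l ^ i.val :=
            mul_right_cancel₀ (zetaL_ne_zero l) h'
          have := (zetaL_prim l).pow_inj (ZMod.val_lt p) (ZMod.val_lt i) h2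
          exact ZMod.val_injective l this
        · rintro rfl; rfl
      by_cases hp : p = i
      · have hxe : x = 1 := hx1.2 hp
        simp only [hxe, one_pow, Finset.sum_const, Finset.card_range, nsmul_eq_mul, mul_one]
        rw [inv_mul_cancel₀ hln]
        have hqj : q = j := by rw [hq, hp, hmcast]; ring
        simp [Matrix.single, hp.symm, hqj.symm]
      · have hxe : x ≠ 1 := fun h => hp (hx1.1 h)
        rw [geom_sum_eq hxe, hxl, sub_self, zero_div, mul_zero]
        simp only [Matrix.single, Matrix.of_apply]
        rw [if_neg]
        rintro ⟨h1, h2⟩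
        exact hp h1.symm
    · simp only [if_neg hq, Finset.sum_const_zero]
      simp only [Matrix.single, Matrix.of_apply]
      rw [if_neg]
      rintro ⟨h1, h2⟩
      exact hq (by rw [← h2, ← h1, hmcast]; ring)
  rw [key]
  exact Submodule.sum_mem _ fun r _ =>
    Submodule.smul_mem _ _ (Submodule.subset_span ⟨r, m, rfl⟩)

end aux

theorem stmt17 (l : ℕ) [NeZero l] (hl : Odd l) (hl1 : 1 ≤ l) :
    Submodule.span ℂ {X : MatL l | ∃ r m : ℤ, X = cmat l r m} = ⊤ := by
  rw [eq_top_iff]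
  have hT : Submodule.span ℂ {X : MatL l | ∃ r m : ℤ, X = amat l r m}
      ≤ Submodule.span ℂ {X : MatL l | ∃ r m : ℤ, X = cmat l r m} := by
    rw [Submodule.span_le]
    rintro X ⟨r, m, rfl⟩
    exact amat_mem l hl r m
  intro M _
  rw [Matrix.matrix_eq_sum_single M]
  refine Submodule.sum_mem _ fun i _ => Submodule.sum_mem _ fun j _ => ?_
  have h1 : Matrix.single i j (M i j) = (M i j) • Matrix.single i j (1 : ℂ) := by
    rw [Matrix.smul_single, smul_eq_mul, mul_one]
  rw [h1]
  exact Submodule.smul_mem _ _ (hT (std_mem l i j))
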